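/- For positive semidefinite operators $A, B$ on a finite-dimensional Hilbert space, $\min\{\operatorname{Tr} A(I-E) + \operatorname{Tr} B E : 0 \le E \le I\} = \frac{1}{2}\operatorname{Tr}(A+B) - \frac{1}{2}\|A-B\|_1$, and the minimum is attained at $E = $ the projection onto the support of $(A-B)_+$. -/

import Mathlib

open Matrix
open scoped ComplexOrder

noncomputable def matAbs {m : ℕ} (A : Matrix (Fin m) (Fin m) ℂ) : Matrix (Fin m) (Fin m) ℂ :=
  (Matrix.posSemidef_conjTranspose_mul_self A).1.eigenvectorUnitary.1 *
    diagonal ((↑) ∘ (√·) ∘ (Matrix.posSemidef_conjTranspose_mul_self A).1.eigenvalues) *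
    (star (Matrix.posSemidef_conjTranspose_mul_self A).1.eigenvectorUnitary : Matrix (Fin m) (Fin m) ℂ)

noncomputable def traceNorm {m : ℕ} (A : Matrix (Fin m) (Fin m) ℂ) : ℝ :=
  ((matAbs A).trace).re

open Classical in
noncomputable def psdSqrt {m : ℕ} (A : Matrix (Fin m) (Fin m) ℂ) : Matrix (Fin m) (Fin m) ℂ :=
  if h : A.PosSemidef then h.1.eigenvectorUnitary.1 *
    diagonal ((↑) ∘ (√·) ∘ h.1.eigenvalues) *
    (star h.1.eigenvectorUnitary : Matrix (Fin m) (Fin m) ℂ) else 0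

noncomputable def fid {m : ℕ} (A B : Matrix (Fin m) (Fin m) ℂ) : ℝ :=
  traceNorm (psdSqrt A * psdSqrt B)

noncomputable def matPosPart {m : ℕ} (A : Matrix (Fin m) (Fin m) ℂ) : Matrix (Fin m) (Fin m) ℂ :=
  (2⁻¹ : ℂ) • (matAbs A + A)

noncomputable def matNegPart {m : ℕ} (A : Matrix (Fin m) (Fin m) ℂ) : Matrix (Fin m) (Fin m) ℂ :=
  (2⁻¹ : ℂ) • (matAbs A - A)

/-!
Write `Δ = A - B = Δ⁺ - Δ⁻` with `Δ⁺, Δ⁻ ≥ 0`, `Δ⁻ Δ⁺ = 0` and `Tr Δ⁺ = (‖Δ‖₁ + Tr Δ) / 2`.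
The cost of a test `E` is `Tr A - Tr (Δ E) = Tr A - Tr Δ⁺ + Tr (Δ⁺ (1 - E)) + Tr (Δ⁻ E)`, and the
last two traces are traces of products of positive matrices, hence nonnegative. Both vanish for
the projection onto the range of `Δ⁺`, which fixes `Δ⁺` and is annihilated by `Δ⁻`.
-/

open scoped MatrixOrder

namespace Matrix

section Range

variable {R l m n p : Type*} [CommSemiring R] [Fintype m] [Fintype n] [Fintype p] [DecidableEq n]

lemma mul_eq_zero_of_range_le {N : Matrix l m R} {M : Matrix m n R} {P : Matrix m p R} (hNP : N * P = 0)
    (h : LinearMap.range M.mulVecLin ≤ LinearMap.range P.mulVecLin) : N * M = 0 := by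
  have hP : LinearMap.range P.mulVecLin ≤ LinearMap.ker N.mulVecLin := by
    rw [LinearMap.range_le_ker_iff, ← mulVecLin_mul, hNP, mulVecLin_zero]
  apply toLin'.injective
  rw [map_zero, toLin'_apply', mulVecLin_mul]
  exact LinearMap.range_le_ker_iff.mp (h.trans hP)

lemma mul_eq_of_idempotent_of_range_le {E : Matrix m m R} {P : Matrix m n R} (hE : E * E = E)
    (h : LinearMap.range P.mulVecLin ≤ LinearMap.range E.mulVecLin) : E * P = P := by
  have hfix : ∀ v, E *ᵥ (P *ᵥ v) = P *ᵥ v := fun v => by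
    obtain ⟨w, hw⟩ := h (LinearMap.mem_range_self P.mulVecLin v)
    simp only [mulVecLin_apply] at hw
    rw [← hw, mulVec_mulVec, hE]
  apply toLin'.injective
  rw [toLin'_apply', toLin'_apply', mulVecLin_mul]
  exact LinearMap.ext hfix

end Range

section PosPart

variable {𝕜 n : Type*} [RCLike 𝕜] [Fintype n] [DecidableEq n]

lemma trace_mul_nonneg {X Y : Matrix n n 𝕜} (hX : 0 ≤ X) (hY : 0 ≤ Y) :
    0 ≤ (X * Y).trace := by
  have hconj : 0 ≤ CFC.sqrt X * Y * CFC.sqrt X :=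
    (CFC.sqrt_nonneg X).isSelfAdjoint.conjugate_nonneg hY
  calc (0 : 𝕜) ≤ (CFC.sqrt X * Y * CFC.sqrt X).trace :=
        (nonneg_iff_posSemidef.mp hconj).trace_nonneg
    _ = (X * Y).trace := by
        rw [trace_mul_comm, ← mul_assoc, CFC.sqrt_mul_sqrt_self X hX]

lemma trace_mul_le_trace_posPart {Δ E : Matrix n n 𝕜} (hΔ : IsSelfAdjoint Δ) (hE₀ : 0 ≤ E)
    (hE₁ : E ≤ 1) : (Δ * E).trace ≤ Δ⁺.trace := by
  have hsplit : (Δ * E).trace = Δ⁺.trace - (Δ⁺ * (1 - E)).trace - (Δ⁻ * E).trace := by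
    calc (Δ * E).trace = ((Δ⁺ - Δ⁻) * E).trace := by rw [CFC.posPart_sub_negPart Δ]
      _ = _ := by
        simp only [sub_mul, mul_sub, mul_one, trace_sub]
        abel
  have hpos := trace_mul_nonneg (CFC.posPart_nonneg Δ) (sub_nonneg.mpr hE₁)
  have hneg := trace_mul_nonneg (CFC.negPart_nonneg Δ) hE₀
  rw [hsplit]
  exact (sub_le_self _ hneg).trans (sub_le_self _ hpos)

lemma trace_mul_eq_trace_posPart {Δ E : Matrix n n 𝕜} (hΔ : IsSelfAdjoint Δ) (hE : E * E = E)
    (hrange : LinearMap.range E.mulVecLin = LinearMap.range Δ⁺.mulVecLin) :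
    (Δ * E).trace = Δ⁺.trace := by
  have hneg : Δ⁻ * E = 0 := mul_eq_zero_of_range_le (CFC.negPart_mul_posPart Δ) hrange.le
  have hpos : E * Δ⁺ = Δ⁺ := mul_eq_of_idempotent_of_range_le hE hrange.ge
  calc (Δ * E).trace = ((Δ⁺ - Δ⁻) * E).trace := by rw [CFC.posPart_sub_negPart Δ]
    _ = Δ⁺.trace := by rw [sub_mul, hneg, sub_zero, trace_mul_comm, hpos]

end PosPart

end Matrix

lemma matAbs_eq_abs {m : ℕ} (A : Matrix (Fin m) (Fin m) ℂ) : matAbs A = CFC.abs A := by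
  have hP := Matrix.posSemidef_conjTranspose_mul_self A
  rw [CFC.abs, CFC.sqrt_eq_cfc, cfc_nnreal_eq_real _ (star A * A), star_eq_conjTranspose,
    hP.1.cfc_eq]
  simp only [matAbs, IsHermitian.cfc, Unitary.conjStarAlgAut_apply]
  congr 3
  funext i
  simp [hP.eigenvalues_nonneg i]

lemma matPosPart_eq_posPart {m : ℕ} {A : Matrix (Fin m) (Fin m) ℂ} (hA : IsSelfAdjoint A) :
    matPosPart A = A⁺ := by
  rw [matPosPart, matAbs_eq_abs, CFC.abs_add_self A, two_smul, ← two_smul ℂ, smul_smul]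
  norm_num

lemma re_trace_matPosPart {m : ℕ} (A : Matrix (Fin m) (Fin m) ℂ) :
    (matPosPart A).trace.re = (traceNorm A + A.trace.re) / 2 := by
  rw [matPosPart, trace_smul, trace_add, traceNorm, smul_eq_mul, ← Complex.add_re]
  norm_num [div_eq_inv_mul]

theorem holevo_helstrom {d : ℕ} (A B : Matrix (Fin d) (Fin d) ℂ)
    (hA : A.PosSemidef) (hB : B.PosSemidef) :
    (∀ E : Matrix (Fin d) (Fin d) ℂ, E.PosSemidef → (1 - E).PosSemidef →
      (1/2) * (((A + B).trace).re) - (1/2) * traceNorm (A - B) ≤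
        ((A * (1 - E)).trace).re + ((B * E).trace).re) ∧
    (∀ E₀ : Matrix (Fin d) (Fin d) ℂ, E₀.IsHermitian → E₀ * E₀ = E₀ →
      LinearMap.range E₀.mulVecLin = LinearMap.range (matPosPart (A - B)).mulVecLin →
      ((A * (1 - E₀)).trace).re + ((B * E₀).trace).re =
        (1/2) * (((A + B).trace).re) - (1/2) * traceNorm (A - B)) := by
  have hΔ : IsSelfAdjoint (A - B) := hA.1.sub hB.1
  have hcost : ∀ E : Matrix (Fin d) (Fin d) ℂ,
      ((A * (1 - E)).trace).re + ((B * E).trace).re = A.trace.re - ((A - B) * E).trace.re := by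
    intro E
    simp only [mul_sub, sub_mul, mul_one, trace_sub, Complex.sub_re]
    ring
  have hbound : (1/2) * (((A + B).trace).re) - (1/2) * traceNorm (A - B) =
      A.trace.re - ((A - B)⁺).trace.re := by
    rw [← matPosPart_eq_posPart hΔ, re_trace_matPosPart]
    simp only [trace_add, trace_sub, Complex.add_re, Complex.sub_re]
    ring
  refine ⟨fun E hE hE₁ => ?_, fun E₀ _ hE₀ hrange => ?_⟩
  · have hle := trace_mul_le_trace_posPart hΔ (nonneg_iff_posSemidef.mpr hE)
      (sub_nonneg.mp (nonneg_iff_posSemidef.mpr hE₁))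
    rw [hcost, hbound]
    linarith [(Complex.le_def.mp hle).1]
  · rw [matPosPart_eq_posPart hΔ] at hrange
    rw [hcost, hbound, trace_mul_eq_trace_posPart hΔ hE₀ hrange]
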